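/- The class of languages recognized by counting automata over P(Σ) is closed under Kleene star: if L_A is recognized by such an automaton, then so is L_A*. -/

import Mathlib

/-- Concatenation of languages. -/
def conc {σ : Type*} (L M : Set (List σ)) : Set (List σ) :=
  {w | ∃ u ∈ L, ∃ v ∈ M, w = u ++ v}

/-- The language of one-letter words with letters from `S ⊆ Σ`. -/
def letters {σ : Type*} (S : Set σ) : Set (List σ) := {w | ∃ x ∈ S, w = [x]}

/-- A counting automaton over `P(Σ)`: states `f₁,…,f_k` (`k ≥ 1`), the first state
being the initial state, transition weight languages `L_{ij} ⊆ Σ`, and final weights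
`{ε}` (final states) or `∅` (non-final states). -/
structure CA (σ : Type*) where
  k : ℕ
  pos : 0 < k
  L : Fin k → Fin k → Set σ
  final : Fin k → Bool

/-- The behavior of each state: `f_i(0)` is the final weight and
`f_i(n+1) = ⋃_j L_{ij}·f_j(n)`. -/
def CA.f {σ : Type*} (A : CA σ) : ℕ → Fin A.k → Set (List σ)
  | 0, i => if A.final i then {([] : List σ)} else ∅
  | n + 1, i => ⋃ j, conc (letters (A.L i j)) (A.f n j)

/-- The language recognized by a counting automaton over `P(Σ)`: `⋃_n f₁(n)`. -/
def CA.lang {σ : Type*} (A : CA σ) : Set (List σ) := ⋃ n, A.f n ⟨0, A.pos⟩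


/-- The Kleene star of a language. -/
def kstar {σ : Type*} (L : Set (List σ)) : Set (List σ) :=
  {w | ∃ l : List (List σ), (∀ u ∈ l, u ∈ L) ∧ w = l.flatten}

/-!
Since every step of `f` reads exactly one letter, `w ∈ f n i` forces `n = |w|`, so a counting
automaton over `P(Σ)` is just a nondeterministic automaton whose transitions are labelled by
sets of letters. The star automaton has a fresh final initial state `0` with the outgoing
transitions of the initial state of `A`, a non-final copy of every state of `A`, and, next to
each transition into a final state of `A`, one with the same letters back to `0`. A run from
`0` is then a sequence of nonempty words of `A.lang`, each ending with a jump back to `0`.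
-/

section kstar

variable {σ : Type*} {L : Set (List σ)}

theorem nil_mem_kstar : [] ∈ kstar L := ⟨[], by simp, rfl⟩

theorem append_mem_kstar {u v : List σ} (hu : u ∈ L) (hv : v ∈ kstar L) :
    u ++ v ∈ kstar L := by
  obtain ⟨l, hl, rfl⟩ := hv
  exact ⟨u :: l, by simpa using ⟨hu, hl⟩, by simp⟩

end kstar

namespace CA

variable {σ : Type*} (A : CA σ)

def start : Fin A.k := ⟨0, A.pos⟩

def Accepts : Fin A.k → List σ → Prop
  | i, [] => A.final i = true
  | i, x :: w => ∃ j, x ∈ A.L i j ∧ Accepts j w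

variable {A}

theorem mem_f_iff {n : ℕ} {i : Fin A.k} {w : List σ} :
    w ∈ A.f n i ↔ w.length = n ∧ A.Accepts i w := by
  induction n generalizing i w with
  | zero => cases w <;> simp [CA.f, Accepts]
  | succ n ih =>
    cases w with
    | nil => simp [CA.f, conc, letters]
    | cons x w =>
      simp only [CA.f, conc, letters, Set.mem_iUnion, Set.mem_ofPred_eq, Accepts, ih]
      constructor
      · rintro ⟨j, _, ⟨y, hy, rfl⟩, v, ⟨hv, hvw⟩, hw⟩
        obtain ⟨rfl, rfl⟩ := List.cons_eq_cons.mp hw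
        exact ⟨by simp [hv], j, hy, hvw⟩
      · rintro ⟨hlen, j, hx, hw⟩
        exact ⟨j, [x], ⟨x, hx, rfl⟩, w, ⟨by simpa using hlen, hw⟩, rfl⟩

theorem mem_lang {w : List σ} : w ∈ A.lang ↔ A.Accepts A.start w := by
  simp [CA.lang, mem_f_iff, start]

variable (A)

/-- The state of `A` whose outgoing transitions a state of `A.star` copies. -/
def src : Fin (A.k + 1) → Fin A.k := Fin.cases A.start id

def star : CA σ where
  k := A.k + 1
  pos := Nat.succ_pos _
  L p := Fin.cases (⋃ m, ⋃ (_ : A.final m = true), A.L (A.src p) m) (A.L (A.src p))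
  final := Fin.cases true fun _ => false

variable {A}

theorem star_L_zero (p : Fin (A.k + 1)) :
    A.star.L p (0 : Fin (A.k + 1)) = ⋃ m, ⋃ (_ : A.final m = true), A.L (A.src p) m := rfl

theorem star_L_succ (p : Fin (A.k + 1)) (j : Fin A.k) : A.star.L p j.succ = A.L (A.src p) j :=
  rfl

theorem star_accepts_nil {p : Fin (A.k + 1)} : A.star.Accepts p [] ↔ p = 0 := by
  cases p using Fin.cases <;> simp [Accepts, star]

theorem star_accepts_cons {p : Fin (A.k + 1)} {x : σ} {w : List σ} :
    A.star.Accepts p (x :: w) ↔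
      (∃ m, A.final m = true ∧ x ∈ A.L (A.src p) m) ∧ A.star.Accepts (0 : Fin (A.k + 1)) w ∨
        ∃ j, x ∈ A.L (A.src p) j ∧ A.star.Accepts j.succ w := by
  change (∃ j : Fin (A.k + 1), x ∈ A.star.L p j ∧ A.star.Accepts j w) ↔ _
  simp only [Fin.exists_fin_succ, star_L_zero, star_L_succ, Set.mem_iUnion, exists_prop]

theorem accepts_star_of_append {p : Fin (A.k + 1)} {u v : List σ}
    (hu : A.Accepts (A.src p) u) (hu₀ : u ≠ []) (hv : A.star.Accepts (0 : Fin (A.k + 1)) v) :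
    A.star.Accepts p (u ++ v) := by
  induction u generalizing p with
  | nil => exact absurd rfl hu₀
  | cons x u ih =>
    obtain ⟨j, hx, hu⟩ := hu
    rw [List.cons_append, star_accepts_cons]
    rcases eq_or_ne u [] with rfl | hne
    · exact Or.inl ⟨⟨j, hu, hx⟩, hv⟩
    · exact Or.inr ⟨j, hx, ih (p := j.succ) hu hne⟩

theorem accepts_star_zero_of_mem_kstar {w : List σ} (hw : w ∈ kstar A.lang) :
    A.star.Accepts (0 : Fin (A.k + 1)) w := by
  obtain ⟨l, hl, rfl⟩ := hw
  induction l with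
  | nil => exact star_accepts_nil.mpr rfl
  | cons u l ih =>
    rw [List.flatten_cons]
    have hl' : ∀ v ∈ l, v ∈ A.lang := fun v hv => hl v (List.mem_cons_of_mem u hv)
    rcases eq_or_ne u [] with rfl | hne
    · exact ih hl'
    · have hu := mem_lang.mp (hl u List.mem_cons_self)
      exact accepts_star_of_append hu hne (ih hl')

theorem accepts_star_split : ∀ {w : List σ} {p : Fin (A.k + 1)}, A.star.Accepts p w →
    p = 0 ∧ w = [] ∨ ∃ u v, A.Accepts (A.src p) u ∧ v ∈ kstar A.lang ∧ w = u ++ v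
  | [], _, h => Or.inl ⟨star_accepts_nil.mp h, rfl⟩
  | x :: w, p, h => by
    rcases star_accepts_cons.mp h with ⟨⟨m, hm, hx⟩, hw⟩ | ⟨j, hx, hw⟩
    · refine Or.inr ⟨[x], w, ⟨m, hx, hm⟩, ?_, rfl⟩
      rcases accepts_star_split hw with ⟨-, rfl⟩ | ⟨u, v, hu, hv, rfl⟩
      · exact nil_mem_kstar
      · exact append_mem_kstar (mem_lang.mpr hu) hv
    · rcases accepts_star_split hw with ⟨hj, -⟩ | ⟨u, v, hu, hv, rfl⟩
      · exact absurd hj (Fin.succ_ne_zero j)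
      · exact Or.inr ⟨x :: u, v, ⟨j, hx, hu⟩, hv, rfl⟩

theorem mem_kstar_of_accepts_star_zero {w : List σ}
    (hw : A.star.Accepts (0 : Fin (A.k + 1)) w) :
    w ∈ kstar A.lang := by
  rcases accepts_star_split hw with ⟨-, rfl⟩ | ⟨u, v, hu, hv, rfl⟩
  · exact nil_mem_kstar
  · exact append_mem_kstar (mem_lang.mpr hu) hv

theorem star_lang : A.star.lang = kstar A.lang := by
  ext w
  rw [mem_lang]
  exact ⟨mem_kstar_of_accepts_star_zero, accepts_star_zero_of_mem_kstar⟩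

end CA

theorem stmt10_general {σ : Type*} (L₁ : Set (List σ))
    (h₁ : ∃ A : CA σ, A.lang = L₁) :
    ∃ C : CA σ, C.lang = kstar L₁ := by
  obtain ⟨A, rfl⟩ := h₁
  exact ⟨A.star, CA.star_lang⟩

/-- The class of languages recognized by counting automata over `P(Σ)` is closed
under Kleene star. -/
theorem stmt10 {σ : Type*} [Fintype σ] (L₁ : Set (List σ))
    (h₁ : ∃ A : CA σ, A.lang = L₁) :
    ∃ C : CA σ, C.lang = kstar L₁ :=
  stmt10_general L₁ h₁
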